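/- arXiv:1504.03980 — 5 statements merged into one kernel-verified Lean document; each statement's English description precedes it below -/
import Mathlib

section
/- For every Dellac configuration C of size n, the blow-up R_C is a rook arrangement on a 2n×2n board (each row and each column has exactly one mark), and moreover every marked cell (r,c) of R_C satisfies ⌈r/2⌉ ≤ c ≤ n + ⌈r/2⌉. -/
/-- A rook arrangement on an `m × m` board (1-based indices). -/
def IsRook (m : ℕ) (R : Finset (ℕ × ℕ)) : Prop :=
  (∀ p ∈ R, p.1 ∈ Finset.Icc 1 m ∧ p.2 ∈ Finset.Icc 1 m) ∧
  (∀ i ∈ Finset.Icc 1 m, ∃! j, (i, j) ∈ R) ∧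
  (∀ j ∈ Finset.Icc 1 m, ∃! i, (i, j) ∈ R)

/-- A Dellac configuration of size `n`: a board with rows `{1,…,n}`, columns `{1,…,2n}`,
one mark per column, two marks per row, and every mark `(i,j)` satisfies `i ≤ j ≤ n+i`. -/
def IsDellac (n : ℕ) (C : Finset (ℕ × ℕ)) : Prop :=
  (∀ p ∈ C, p.1 ∈ Finset.Icc 1 n ∧ p.2 ∈ Finset.Icc 1 (2 * n)) ∧
  (∀ j ∈ Finset.Icc 1 (2 * n), ∃! i, (i, j) ∈ C) ∧
  (∀ i ∈ Finset.Icc 1 n, (C.filter (fun p => p.1 = i)).card = 2) ∧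
  (∀ p ∈ C, p.1 ≤ p.2 ∧ p.2 ≤ n + p.1)

/-- The blow map: row `i` of `C` with marks at columns `j < k` produces marks
`(2i-1, j)` and `(2i, k)`. -/
def blow (C : Finset (ℕ × ℕ)) : Finset (ℕ × ℕ) :=
  C.image (fun p =>
    if (C.filter (fun q => q.1 = p.1 ∧ q.2 < p.2)).Nonempty then (2 * p.1, p.2)
    else (2 * p.1 - 1, p.2))

/-- The blow function applied to a single cell. -/
def bf (C : Finset (ℕ × ℕ)) (p : ℕ × ℕ) : ℕ × ℕ :=
  if (C.filter (fun q => q.1 = p.1 ∧ q.2 < p.2)).Nonempty then (2 * p.1, p.2)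
  else (2 * p.1 - 1, p.2)

lemma blow_eq (C : Finset (ℕ × ℕ)) : blow C = C.image (bf C) := rfl

lemma mem_blow {C : Finset (ℕ × ℕ)} {p : ℕ × ℕ} :
    p ∈ blow C ↔ ∃ q ∈ C, bf C q = p := by
  rw [blow_eq]; exact Finset.mem_image

lemma bf_snd (C : Finset (ℕ × ℕ)) (p : ℕ × ℕ) : (bf C p).2 = p.2 := by
  unfold bf; split <;> rfl

lemma bf_fst (C : Finset (ℕ × ℕ)) (p : ℕ × ℕ) :
    (bf C p).1 = 2 * p.1 ∨ (bf C p).1 = 2 * p.1 - 1 := by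
  unfold bf; split <;> simp

lemma row_pair {n : ℕ} {C : Finset (ℕ × ℕ)} (hC : IsDellac n C) {i : ℕ}
    (hi : i ∈ Finset.Icc 1 n) :
    ∃ j k, j < k ∧ (i, j) ∈ C ∧ (i, k) ∈ C ∧ ∀ l, (i, l) ∈ C → l = j ∨ l = k := by
  obtain ⟨a, b, hab, hset⟩ := Finset.card_eq_two.mp (hC.2.2.1 i hi)
  have ha : a ∈ C.filter (fun p => p.1 = i) := by rw [hset]; simp
  have hb : b ∈ C.filter (fun p => p.1 = i) := by rw [hset]; simp
  simp only [Finset.mem_filter] at ha hb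
  obtain ⟨a1, a2⟩ := a
  obtain ⟨b1, b2⟩ := b
  simp only at ha hb
  obtain ⟨haC, ha1⟩ := ha
  obtain ⟨hbC, hb1⟩ := hb
  subst i; subst hb1
  have hne : a2 ≠ b2 := fun h => hab (by rw [h])
  have hmem : ∀ l, (b1, l) ∈ C → l = a2 ∨ l = b2 := by
    intro l hl
    have h2 : (b1, l) ∈ C.filter (fun p => p.1 = b1) := Finset.mem_filter.mpr ⟨hl, rfl⟩
    rw [hset] at h2
    rcases Finset.mem_insert.mp h2 with h | h
    · left; exact congrArg Prod.snd h
    · right; exact congrArg Prod.snd (Finset.mem_singleton.mp h)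
  rcases hne.lt_or_gt with h | h
  · exact ⟨a2, b2, h, haC, hbC, hmem⟩
  · exact ⟨b2, a2, h, hbC, haC, fun l hl => (hmem l hl).symm⟩

lemma bf_small {C : Finset (ℕ × ℕ)} {i j k : ℕ} (hjk : j < k)
    (huniq : ∀ l, (i, l) ∈ C → l = j ∨ l = k) :
    bf C (i, j) = (2 * i - 1, j) := by
  unfold bf
  rw [if_neg]
  rintro ⟨⟨r1, r2⟩, hr⟩
  simp only [Finset.mem_filter] at hr
  obtain ⟨hrC, hr1, hr2⟩ := hr
  subst hr1
  have := huniq r2 hrC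
  omega

lemma bf_large {C : Finset (ℕ × ℕ)} {i j k : ℕ} (hj : (i, j) ∈ C) (hjk : j < k) :
    bf C (i, k) = (2 * i, k) := by
  unfold bf
  rw [if_pos ⟨(i, j), Finset.mem_filter.mpr ⟨hj, rfl, hjk⟩⟩]

theorem stmt2 (n : ℕ) (C : Finset (ℕ × ℕ)) (hC : IsDellac n C) :
    IsRook (2 * n) (blow C) ∧
    ∀ p ∈ blow C, (p.1 + 1) / 2 ≤ p.2 ∧ p.2 ≤ n + (p.1 + 1) / 2 := by
  have hcell := hC.1
  have hcol := hC.2.1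
  have hbound := hC.2.2.2
  refine ⟨⟨?_, ?_, ?_⟩, ?_⟩
  · -- board bounds
    intro p hp
    obtain ⟨q, hq, hfq⟩ := mem_blow.mp hp
    obtain ⟨h1, h2⟩ := hcell q hq
    have hsnd := bf_snd C q
    rw [hfq] at hsnd
    have hfst := bf_fst C q
    rw [hfq] at hfst
    simp only [Finset.mem_Icc] at *
    omega
  · -- rows
    intro r hr
    simp only [Finset.mem_Icc] at hr
    have hiI : (r + 1) / 2 ∈ Finset.Icc 1 n := Finset.mem_Icc.mpr (by omega)
    set i := (r + 1) / 2 with hidef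
    obtain ⟨j, k, hjk, hj, hk, huniq⟩ := row_pair hC hiI
    have hi1 : 1 ≤ i := (Finset.mem_Icc.mp hiI).1
    have hcase : r = 2 * i - 1 ∨ r = 2 * i := by omega
    -- generic uniqueness helper
    have huniq2 : ∀ m, (r, m) ∈ blow C →
        (r = 2 * i - 1 ∧ m = j) ∨ (r = 2 * i ∧ m = k) := by
      intro m hm
      obtain ⟨q, hq, hfq⟩ := mem_blow.mp hm
      obtain ⟨q1, q2⟩ := q
      have hq1 : 1 ≤ q1 := (Finset.mem_Icc.mp ((hcell _ hq).1)).1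
      have hfst := bf_fst C (q1, q2)
      rw [hfq] at hfst
      have hq1i : q1 = i := by
        simp only [] at hfst
        rcases hfst with h | h <;> omega
      subst hq1i
      rcases huniq q2 hq with h2 | h2 <;> subst h2
      · rw [bf_small hjk huniq] at hfq
        left
        have h1 := congrArg Prod.fst hfq
        have h2 := congrArg Prod.snd hfq
        simp only [] at h1 h2
        omega
      · rw [bf_large hj hjk] at hfq
        right
        have h1 := congrArg Prod.fst hfq
        have h2 := congrArg Prod.snd hfq
        simp only [] at h1 h2
        omega
    rcases hcase with hre | hre
    · refine ⟨j, ?_, ?_⟩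
      · refine mem_blow.mpr ⟨(i, j), hj, ?_⟩
        rw [bf_small hjk huniq, hre]
      · intro m hm
        rcases huniq2 m hm with h | h
        · exact h.2
        · omega
    · refine ⟨k, ?_, ?_⟩
      · refine mem_blow.mpr ⟨(i, k), hk, ?_⟩
        rw [bf_large hj hjk, hre]
      · intro m hm
        rcases huniq2 m hm with h | h
        · omega
        · exact h.2
  · -- columns
    intro c hc
    obtain ⟨i0, hi0, hi0u⟩ := hcol c hc
    refine ⟨(bf C (i0, c)).1, ?_, ?_⟩
    · refine mem_blow.mpr ⟨(i0, c), hi0, ?_⟩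
      exact Prod.ext_iff.mpr ⟨rfl, bf_snd C (i0, c)⟩
    · intro r' hr'
      obtain ⟨q, hq, hfq⟩ := mem_blow.mp hr'
      obtain ⟨q1, q2⟩ := q
      have hq2 : q2 = c := by
        have h := bf_snd C (q1, q2)
        rw [hfq] at h
        exact h.symm
      subst hq2
      have hq1 : q1 = i0 := hi0u q1 hq
      subst hq1
      have := congrArg Prod.fst hfq
      exact this.symm
  · -- cell inequalities
    intro p hp
    obtain ⟨q, hq, hfq⟩ := mem_blow.mp hp
    have hb := hbound q hq
    have hq1 : 1 ≤ q.1 := (Finset.mem_Icc.mp ((hcell q hq).1)).1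
    have hsnd := bf_snd C q
    rw [hfq] at hsnd
    have hfst := bf_fst C q
    rw [hfq] at hfst
    rcases hfst with h | h <;> omega
end

section
/- For every rook arrangement R on a 2n×2n board all of whose marks (r,c) satisfy ⌈r/2⌉ ≤ c ≤ n + ⌈r/2⌉, the melt C_R (obtained by merging rows 2k-1 and 2k for each k) is a Dellac configuration of size n. -/
/-- The melt map: cell `(k,l)` is marked iff `R` marks `(2k-1,l)` or `(2k,l)`.
Note `(r+1)/2 = ⌈r/2⌉` in natural division. -/
def melt (R : Finset (ℕ × ℕ)) : Finset (ℕ × ℕ) :=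
  R.image (fun p => ((p.1 + 1) / 2, p.2))

theorem stmt3 (n : ℕ) (R : Finset (ℕ × ℕ)) (hR : IsRook (2 * n) R)
    (hbd : ∀ p ∈ R, (p.1 + 1) / 2 ≤ p.2 ∧ p.2 ≤ n + (p.1 + 1) / 2) :
    IsDellac n (melt R) := by
  obtain ⟨hbound, hrow, hcol⟩ := hR
  refine ⟨?_, ?_, ?_, ?_⟩
  · rintro ⟨k, l⟩ hp
    simp only [melt, Finset.mem_image] at hp
    obtain ⟨⟨r, c⟩, hq, heq⟩ := hp
    obtain ⟨h1, h2⟩ := hbound _ hq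
    simp only [Finset.mem_Icc] at h1 h2 ⊢
    have hk : (r + 1) / 2 = k := congrArg Prod.fst heq
    have hl : c = l := congrArg Prod.snd heq
    omega
  · intro j hj
    obtain ⟨r, hrR, hru⟩ := hcol j hj
    refine ⟨(r + 1) / 2, Finset.mem_image.2 ⟨(r, j), hrR, rfl⟩, ?_⟩
    intro i hi
    simp only [melt, Finset.mem_image] at hi
    obtain ⟨⟨r', c⟩, hq, heq⟩ := hi
    have h1 : (r' + 1) / 2 = i := congrArg Prod.fst heq
    have h2 : c = j := congrArg Prod.snd heq
    subst h2
    have := hru r' hq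
    omega
  · intro i hi
    simp only [Finset.mem_Icc] at hi
    have h1 : 2 * i - 1 ∈ Finset.Icc 1 (2 * n) := by simp only [Finset.mem_Icc]; omega
    have h2 : 2 * i ∈ Finset.Icc 1 (2 * n) := by simp only [Finset.mem_Icc]; omega
    obtain ⟨j1, hj1, hj1u⟩ := hrow _ h1
    obtain ⟨j2, hj2, hj2u⟩ := hrow _ h2
    have hne : j1 ≠ j2 := by
      intro h
      subst h
      obtain ⟨r, _, hru⟩ := hcol j1 ((hbound _ hj1).2)
      have e1 := hru _ hj1
      have e2 := hru _ hj2
      omega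
    have hset : (melt R).filter (fun p => p.1 = i) = {(i, j1), (i, j2)} := by
      ext ⟨k, l⟩
      simp only [Finset.mem_filter, melt, Finset.mem_image, Finset.mem_insert,
        Finset.mem_singleton, Prod.mk.injEq]
      constructor
      · rintro ⟨⟨⟨r, c⟩, hrc, heq⟩, hk⟩
        have hk' : (r + 1) / 2 = k := heq.1
        have hl : c = l := heq.2
        have hr1 : 1 ≤ r := (Finset.mem_Icc.1 (hbound _ hrc).1).1
        have hcase : r = 2 * i - 1 ∨ r = 2 * i := by omega
        rcases hcase with h | h
        · left; exact ⟨hk, by rw [← hl]; exact hj1u c (h ▸ hrc)⟩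
        · right; exact ⟨hk, by rw [← hl]; exact hj2u c (h ▸ hrc)⟩
      · rintro (⟨h1, h2⟩ | ⟨h1, h2⟩)
        · exact ⟨⟨(2 * i - 1, j1), hj1, by simp only [Prod.mk.injEq]; omega⟩, h1⟩
        · exact ⟨⟨(2 * i, j2), hj2, by simp only [Prod.mk.injEq]; omega⟩, h1⟩
    rw [hset, Finset.card_insert_of_notMem (by simp [hne]), Finset.card_singleton]
  · rintro ⟨k, l⟩ hp
    simp only [melt, Finset.mem_image] at hp
    obtain ⟨⟨r, c⟩, hq, heq⟩ := hp
    have hk : (r + 1) / 2 = k := congrArg Prod.fst heq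
    have hl : c = l := congrArg Prod.snd heq
    obtain ⟨b1, b2⟩ := hbd _ hq
    simp only at b1 b2 ⊢
    omega
end

section
/- The blow map b is injective on Dellac configurations of size n, and its image consists exactly of those rook arrangements R on a 2n×2n board such that all marks (r,c) satisfy ⌈r/2⌉ ≤ c ≤ n + ⌈r/2⌉ and the associated permutation σ_R satisfies σ_R(2k-1) < σ_R(2k) for all 1 ≤ k ≤ n. -/
namespace Stmt5Aux

def deb (p : ℕ × ℕ) : ℕ × ℕ := ((p.1 + 1) / 2, p.2)

lemma deb_blow (C : Finset (ℕ × ℕ)) : (blow C).image deb = C := by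
  unfold blow
  rw [Finset.image_image]
  have h : ∀ p ∈ C, (deb ∘ fun p =>
      if (C.filter (fun q => q.1 = p.1 ∧ q.2 < p.2)).Nonempty then (2 * p.1, p.2)
      else (2 * p.1 - 1, p.2)) p = id p := by
    intro p _
    by_cases h : (C.filter (fun q => q.1 = p.1 ∧ q.2 < p.2)).Nonempty <;>
      simp only [Function.comp_apply, h, if_true, if_false, deb, id_eq, Prod.ext_iff] <;>
      exact ⟨by omega, trivial⟩
  rw [Finset.image_congr h, Finset.image_id]

lemma mem_blow (C : Finset (ℕ × ℕ)) (r c : ℕ) :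
    (r, c) ∈ blow C ↔ ∃ i, (i, c) ∈ C ∧
      ((¬ (C.filter (fun q => q.1 = i ∧ q.2 < c)).Nonempty ∧ r = 2 * i - 1) ∨
       ((C.filter (fun q => q.1 = i ∧ q.2 < c)).Nonempty ∧ r = 2 * i)) := by
  unfold blow
  rw [Finset.mem_image]
  constructor
  · rintro ⟨p, hp, hfp⟩
    by_cases h : (C.filter (fun q => q.1 = p.1 ∧ q.2 < p.2)).Nonempty
    · rw [if_pos h, Prod.mk.injEq] at hfp
      obtain ⟨h1, h2⟩ := hfp
      subst h2
      exact ⟨p.1, hp, Or.inr ⟨h, h1.symm⟩⟩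
    · rw [if_neg h, Prod.mk.injEq] at hfp
      obtain ⟨h1, h2⟩ := hfp
      subst h2
      exact ⟨p.1, hp, Or.inl ⟨h, h1.symm⟩⟩
  · rintro ⟨i, hic, ⟨h, rfl⟩ | ⟨h, rfl⟩⟩
    · exact ⟨(i, c), hic, by rw [if_neg h]⟩
    · exact ⟨(i, c), hic, by rw [if_pos h]⟩

lemma rowsD {n : ℕ} {C : Finset (ℕ × ℕ)} (hC : IsDellac n C) {i : ℕ}
    (hi : i ∈ Finset.Icc 1 n) :
    ∃ j1 j2, j1 < j2 ∧ (i, j1) ∈ C ∧ (i, j2) ∈ C ∧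
      ∀ j, (i, j) ∈ C → j = j1 ∨ j = j2 := by
  obtain ⟨h1, h2, h3, h4⟩ := hC
  have hcard := h3 i hi
  rw [Finset.card_eq_two] at hcard
  obtain ⟨a, b, hab, he⟩ := hcard
  have ha : a ∈ C ∧ a.1 = i := by
    have : a ∈ C.filter (fun p => p.1 = i) := by rw [he]; simp
    simpa using this
  have hb : b ∈ C ∧ b.1 = i := by
    have : b ∈ C.filter (fun p => p.1 = i) := by rw [he]; simp
    simpa using this
  have hne : a.2 ≠ b.2 := by
    intro h
    exact hab (Prod.ext (ha.2.trans hb.2.symm) h)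
  have hmem : ∀ j, (i, j) ∈ C → (i, j) = a ∨ (i, j) = b := by
    intro j hj
    have : (i, j) ∈ C.filter (fun p => p.1 = i) := Finset.mem_filter.mpr ⟨hj, rfl⟩
    rw [he] at this
    simpa using this
  have haC : (i, a.2) ∈ C := by rw [← ha.2]; exact ha.1
  have hbC : (i, b.2) ∈ C := by rw [← hb.2]; exact hb.1
  rcases lt_or_gt_of_ne hne with h | h
  · refine ⟨a.2, b.2, h, haC, hbC, fun j hj => ?_⟩
    rcases hmem j hj with h' | h' <;> [left; right] <;>
      exact congrArg Prod.snd h'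
  · refine ⟨b.2, a.2, h, hbC, haC, fun j hj => ?_⟩
    rcases hmem j hj with h' | h' <;> [right; left] <;>
      exact congrArg Prod.snd h'

theorem stmt5_main (n : ℕ) :
    (∀ C C' : Finset (ℕ × ℕ), IsDellac n C → IsDellac n C' → blow C = blow C' → C = C') ∧
    (∀ R : Finset (ℕ × ℕ),
      (∃ C, IsDellac n C ∧ blow C = R) ↔
        (IsRook (2 * n) R ∧
         (∀ p ∈ R, (p.1 + 1) / 2 ≤ p.2 ∧ p.2 ≤ n + (p.1 + 1) / 2) ∧
         ∀ k ∈ Finset.Icc 1 n, ∀ j j',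
           (2 * k - 1, j) ∈ R → (2 * k, j') ∈ R → j < j')) := by
  constructor
  · intro C C' _ _ h
    rw [← deb_blow C, h, deb_blow]
  · intro R
    constructor
    · -- forward
      rintro ⟨C, hC, rfl⟩
      obtain ⟨h1, h2, h3, h4⟩ := id hC
      refine ⟨⟨?_, ?_, ?_⟩, ?_, ?_⟩
      · -- range
        rintro ⟨r, c⟩ hp
        rw [mem_blow] at hp
        obtain ⟨i, hic, hcase⟩ := hp
        have hi := Finset.mem_Icc.mp (h1 _ hic).1
        have hc := Finset.mem_Icc.mp (h1 _ hic).2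
        dsimp only at hi hc ⊢
        rcases hcase with ⟨-, rfl⟩ | ⟨-, rfl⟩ <;>
          simp only [Finset.mem_Icc] <;> omega
      · -- rows of blow C
        intro r hr
        rw [Finset.mem_Icc] at hr
        have hi : (r + 1) / 2 ∈ Finset.Icc 1 n := by rw [Finset.mem_Icc]; omega
        obtain ⟨j1, j2, hlt, hj1, hj2, hall⟩ := rowsD hC hi
        have hi' := Finset.mem_Icc.mp hi
        have hsmall : ¬ (C.filter (fun q => q.1 = (r + 1) / 2 ∧ q.2 < j1)).Nonempty := by
          rintro ⟨q, hq⟩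
          rw [Finset.mem_filter] at hq
          have : ((r + 1) / 2, q.2) ∈ C := by rw [← hq.2.1]; exact hq.1
          rcases hall _ this with h | h <;> omega
        have hbig : (C.filter (fun q => q.1 = (r + 1) / 2 ∧ q.2 < j2)).Nonempty :=
          ⟨((r + 1) / 2, j1), Finset.mem_filter.mpr ⟨hj1, rfl, hlt⟩⟩
        rcases (by omega : r = 2 * ((r + 1) / 2) - 1 ∨ r = 2 * ((r + 1) / 2)) with h | h
        · refine ⟨j1, (mem_blow C r j1).mpr ⟨(r + 1) / 2, hj1, Or.inl ⟨hsmall, h⟩⟩, ?_⟩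
          intro c hcm
          rw [mem_blow] at hcm
          obtain ⟨i', hic', hcase⟩ := hcm
          have hib := Finset.mem_Icc.mp (h1 _ hic').1
          dsimp only at hib
          rcases hcase with ⟨hs', hr'⟩ | ⟨hb', hr'⟩
          · have : i' = (r + 1) / 2 := by omega
            subst this
            rcases hall _ hic' with rfl | rfl
            · rfl
            · exact absurd hbig hs'
          · omega
        · refine ⟨j2, (mem_blow C r j2).mpr ⟨(r + 1) / 2, hj2, Or.inr ⟨hbig, h⟩⟩, ?_⟩
          intro c hcm
          rw [mem_blow] at hcm
          obtain ⟨i', hic', hcase⟩ := hcm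
          have hib := Finset.mem_Icc.mp (h1 _ hic').1
          dsimp only at hib
          rcases hcase with ⟨hs', hr'⟩ | ⟨hb', hr'⟩
          · omega
          · have : i' = (r + 1) / 2 := by omega
            subst this
            rcases hall _ hic' with rfl | rfl
            · exact absurd hb' hsmall
            · rfl
      · -- columns of blow C
        intro c hc
        obtain ⟨i, hic, huniq⟩ := h2 c hc
        have hi := Finset.mem_Icc.mp (h1 _ hic).1
        dsimp only at hi
        by_cases hb : (C.filter (fun q => q.1 = i ∧ q.2 < c)).Nonempty
        · refine ⟨2 * i, (mem_blow C _ c).mpr ⟨i, hic, Or.inr ⟨hb, rfl⟩⟩, ?_⟩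
          intro r hr
          rw [mem_blow] at hr
          obtain ⟨i', hic', hcase⟩ := hr
          have : i' = i := huniq i' hic'
          subst this
          rcases hcase with ⟨hs', rfl⟩ | ⟨-, rfl⟩
          · exact absurd hb hs'
          · rfl
        · refine ⟨2 * i - 1, (mem_blow C _ c).mpr ⟨i, hic, Or.inl ⟨hb, rfl⟩⟩, ?_⟩
          intro r hr
          rw [mem_blow] at hr
          obtain ⟨i', hic', hcase⟩ := hr
          have : i' = i := huniq i' hic'
          subst this
          rcases hcase with ⟨-, rfl⟩ | ⟨hb', rfl⟩
          · rfl
          · exact absurd hb' hb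
      · -- bounds
        rintro ⟨r, c⟩ hp
        rw [mem_blow] at hp
        obtain ⟨i, hic, hcase⟩ := hp
        have hi := Finset.mem_Icc.mp (h1 _ hic).1
        have hb := h4 _ hic
        dsimp only at hi hb ⊢
        rcases hcase with ⟨-, rfl⟩ | ⟨-, rfl⟩ <;> omega
      · -- ordering
        intro k hk j j' hj hj'
        rw [Finset.mem_Icc] at hk
        rw [mem_blow] at hj hj'
        obtain ⟨i1, hic1, hcase1⟩ := hj
        obtain ⟨i2, hic2, hcase2⟩ := hj'
        have h11 := Finset.mem_Icc.mp (h1 _ hic1).1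
        have h12 := Finset.mem_Icc.mp (h1 _ hic2).1
        dsimp only at h11 h12
        rcases hcase1 with ⟨hs, he1⟩ | ⟨-, he1⟩
        · rcases hcase2 with ⟨-, he2⟩ | ⟨hb, he2⟩
          · omega
          · have hik1 : i1 = k := by omega
            have hik2 : i2 = k := by omega
            subst hik1; subst hik2
            by_contra hle
            push_neg at hle
            obtain ⟨q, hq⟩ := hb
            rw [Finset.mem_filter] at hq
            exact hs ⟨q, Finset.mem_filter.mpr ⟨hq.1, hq.2.1, by omega⟩⟩
        · omega
    · -- backward
      rintro ⟨⟨hRange, hRow, hCol⟩, hB, hO⟩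
      have memC : ∀ i c, (i, c) ∈ R.image deb ↔ ∃ r, (r, c) ∈ R ∧ (r + 1) / 2 = i := by
        intro i c
        rw [Finset.mem_image]
        constructor
        · rintro ⟨p, hp, he⟩
          rw [deb, Prod.mk.injEq] at he
          refine ⟨p.1, ?_, he.1⟩
          rw [← he.2]; exact hp
        · rintro ⟨r, hr, he⟩
          exact ⟨(r, c), hr, by rw [deb, he]⟩
      have rowC : ∀ i, 1 ≤ i → i ≤ n → ∃ j1 j2, j1 < j2 ∧
          (2 * i - 1, j1) ∈ R ∧ (2 * i, j2) ∈ R ∧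
          (i, j1) ∈ R.image deb ∧ (i, j2) ∈ R.image deb ∧
          (∀ j, (2 * i - 1, j) ∈ R → j = j1) ∧ (∀ j, (2 * i, j) ∈ R → j = j2) ∧
          (∀ c, (i, c) ∈ R.image deb → c = j1 ∨ c = j2) := by
        intro i hi1 hi2
        obtain ⟨j1, hj1, hu1⟩ := hRow (2 * i - 1) (by rw [Finset.mem_Icc]; omega)
        obtain ⟨j2, hj2, hu2⟩ := hRow (2 * i) (by rw [Finset.mem_Icc]; omega)
        have hlt : j1 < j2 := hO i (by rw [Finset.mem_Icc]; omega) j1 j2 hj1 hj2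
        refine ⟨j1, j2, hlt, hj1, hj2,
          (memC _ _).mpr ⟨2 * i - 1, hj1, by omega⟩,
          (memC _ _).mpr ⟨2 * i, hj2, by omega⟩, hu1, hu2, ?_⟩
        intro c hc
        rw [memC] at hc
        obtain ⟨r, hr, he⟩ := hc
        have hrb := Finset.mem_Icc.mp (hRange _ hr).1
        dsimp only at hrb
        rcases (by omega : r = 2 * i - 1 ∨ r = 2 * i) with rfl | rfl
        · exact Or.inl (hu1 _ hr)
        · exact Or.inr (hu2 _ hr)
      have hCD : IsDellac n (R.image deb) := by
        refine ⟨?_, ?_, ?_, ?_⟩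
        · rintro ⟨i, c⟩ hp
          rw [memC] at hp
          obtain ⟨r, hr, he⟩ := hp
          have h1 := Finset.mem_Icc.mp (hRange _ hr).1
          have h2 := Finset.mem_Icc.mp (hRange _ hr).2
          dsimp only at h1 h2 ⊢
          simp only [Finset.mem_Icc]
          omega
        · intro c hc
          obtain ⟨r, hr, hu⟩ := hCol c hc
          refine ⟨(r + 1) / 2, (memC _ _).mpr ⟨r, hr, rfl⟩, ?_⟩
          intro i hi
          rw [memC] at hi
          obtain ⟨r', hr', he⟩ := hi
          rw [← he, hu r' hr']
        · intro i hi
          rw [Finset.mem_Icc] at hi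
          obtain ⟨j1, j2, hlt, hj1, hj2, hCj1, hCj2, hu1, hu2, hall⟩ := rowC i hi.1 hi.2
          have hset : (R.image deb).filter (fun p => p.1 = i) = {(i, j1), (i, j2)} := by
            ext ⟨i', c⟩
            simp only [Finset.mem_filter, Finset.mem_insert, Finset.mem_singleton]
            constructor
            · rintro ⟨hm, hi'⟩
              have hi'' : i' = i := hi'
              subst hi''
              rcases hall c hm with rfl | rfl
              · exact Or.inl rfl
              · exact Or.inr rfl
            · rintro (⟨rfl, rfl⟩ | ⟨rfl, rfl⟩)
              · exact ⟨hCj1, rfl⟩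
              · exact ⟨hCj2, rfl⟩
          rw [hset, Finset.card_insert_of_notMem (by simp [Prod.ext_iff]; omega),
            Finset.card_singleton]
        · rintro ⟨i, c⟩ hp
          rw [memC] at hp
          obtain ⟨r, hr, he⟩ := hp
          have := hB _ hr
          dsimp only at this ⊢
          omega
      refine ⟨R.image deb, hCD, ?_⟩
      ext ⟨r, c⟩
      rw [mem_blow]
      constructor
      · rintro ⟨i, hic, hcase⟩
        have hib : 1 ≤ i ∧ i ≤ n := by
          have := Finset.mem_Icc.mp ((hCD.1 _ hic).1)
          exact this
        obtain ⟨j1, j2, hlt, hRj1, hRj2, hCj1, hCj2, hu1, hu2, hall⟩ :=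
          rowC i hib.1 hib.2
        rcases hcase with ⟨hs, rfl⟩ | ⟨hb, rfl⟩
        · rcases hall c hic with rfl | rfl
          · exact hRj1
          · exact absurd ⟨(i, j1), Finset.mem_filter.mpr ⟨hCj1, rfl, hlt⟩⟩ hs
        · rcases hall c hic with rfl | rfl
          · obtain ⟨q, hq⟩ := hb
            rw [Finset.mem_filter] at hq
            have : (i, q.2) ∈ R.image deb := by rw [← hq.2.1]; exact hq.1
            rcases hall _ this with h | h <;> omega
          · exact hRj2
      · intro hr
        have hrb := Finset.mem_Icc.mp (hRange _ hr).1
        dsimp only at hrb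
        obtain ⟨i, hi1, hi2, hieq⟩ :
            ∃ i, 1 ≤ i ∧ i ≤ n ∧ (r = 2 * i - 1 ∨ r = 2 * i) :=
          ⟨(r + 1) / 2, by omega, by omega, by omega⟩
        obtain ⟨j1, j2, hlt, hRj1, hRj2, hCj1, hCj2, hu1, hu2, hall⟩ := rowC i hi1 hi2
        rcases hieq with rfl | rfl
        · have hc : c = j1 := hu1 c hr
          subst hc
          refine ⟨i, hCj1, Or.inl ⟨?_, rfl⟩⟩
          rintro ⟨q, hq⟩
          rw [Finset.mem_filter] at hq
          have : (i, q.2) ∈ R.image deb := by rw [← hq.2.1]; exact hq.1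
          rcases hall _ this with h | h <;> omega
        · have hc : c = j2 := hu2 c hr
          subst hc
          exact ⟨i, hCj2, Or.inr
            ⟨⟨(i, j1), Finset.mem_filter.mpr ⟨hCj1, rfl, hlt⟩⟩, rfl⟩⟩

end Stmt5Aux

/-- `b` is injective on Dellac configurations of size `n`, and its image consists
exactly of the rook arrangements on the `2n × 2n` board whose marks `(r,c)` satisfy
`⌈r/2⌉ ≤ c ≤ n + ⌈r/2⌉` and whose associated permutation satisfies
`σ_R(2k-1) < σ_R(2k)` for `1 ≤ k ≤ n` (phrased directly via marked cells). -/
theorem stmt5 (n : ℕ) :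
    (∀ C C' : Finset (ℕ × ℕ), IsDellac n C → IsDellac n C' → blow C = blow C' → C = C') ∧
    (∀ R : Finset (ℕ × ℕ),
      (∃ C, IsDellac n C ∧ blow C = R) ↔
        (IsRook (2 * n) R ∧
         (∀ p ∈ R, (p.1 + 1) / 2 ≤ p.2 ∧ p.2 ≤ n + (p.1 + 1) / 2) ∧
         ∀ k ∈ Finset.Icc 1 n, ∀ j j',
           (2 * k - 1, j) ∈ R → (2 * k, j') ∈ R → j < j')) :=
  Stmt5Aux.stmt5_main n
end

section
/- The permutation τ_n ∈ S_{2n} avoids all four patterns 4231, 35142, 42513, and 351624. -/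
/-- `σ` (a permutation of `{1,…,m}`) contains the pattern `π ∈ S_r`:
there are indices `f(1) < ⋯ < f(r)` in `{1,…,m}` such that
`σ(f(a)) < σ(f(b)) ↔ π(a) < π(b)`. -/
def Contains (m : ℕ) (σ : ℕ → ℕ) (r : ℕ) (π : ℕ → ℕ) : Prop :=
  ∃ f : ℕ → ℕ, StrictMonoOn f (Set.Icc 1 r) ∧ (∀ a ∈ Set.Icc 1 r, f a ∈ Set.Icc 1 m) ∧
    ∀ a ∈ Set.Icc 1 r, ∀ b ∈ Set.Icc 1 r, (σ (f a) < σ (f b) ↔ π a < π b)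

/-- A pattern given by its list of values (1-based). -/
def patt (L : List ℕ) : ℕ → ℕ := fun a => L.getD (a - 1) 0

/-- `τ_n ∈ S_{2n}` (given by `τ_n(2k-1) = k`, `τ_n(2k) = n+k`) avoids the patterns
`4231`, `35142`, `42513` and `351624`. -/
theorem stmt7 (n : ℕ) (σ : Equiv.Perm ℕ)
    (hσ : ∀ k, k ∉ Finset.Icc 1 (2 * n) → σ k = k)
    (hvals : ∀ k ∈ Finset.Icc 1 n, σ (2 * k - 1) = k ∧ σ (2 * k) = n + k) :
    ¬ Contains (2 * n) σ 4 (patt [4, 2, 3, 1]) ∧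
    ¬ Contains (2 * n) σ 5 (patt [3, 5, 1, 4, 2]) ∧
    ¬ Contains (2 * n) σ 5 (patt [4, 2, 5, 1, 3]) ∧
    ¬ Contains (2 * n) σ 6 (patt [3, 5, 1, 6, 2, 4]) := by
  have val_odd : ∀ i, 1 ≤ i → i ≤ 2 * n → i % 2 = 1 → σ i = (i + 1) / 2 := by
    intro i h1 h2 hm
    have hk : (i + 1) / 2 ∈ Finset.Icc 1 n := by rw [Finset.mem_Icc]; omega
    have h := (hvals _ hk).1
    have he : 2 * ((i + 1) / 2) - 1 = i := by omega
    rwa [he] at h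
  have val_even : ∀ i, 1 ≤ i → i ≤ 2 * n → i % 2 = 0 → σ i = n + i / 2 := by
    intro i h1 h2 hm
    have hk : i / 2 ∈ Finset.Icc 1 n := by rw [Finset.mem_Icc]; omega
    have h := (hvals _ hk).2
    have he : 2 * (i / 2) = i := by omega
    rwa [he] at h
  have key : ∀ i j, 1 ≤ i → i < j → j ≤ 2 * n →
      (σ j < σ i ↔ (i % 2 = 0 ∧ j % 2 = 1)) := by
    intro i j hi hij hj
    rcases Nat.even_or_odd i with hie | hio <;> rcases Nat.even_or_odd j with hje | hjo
    · have hi2 := Nat.even_iff.mp hie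
      have hj2 := Nat.even_iff.mp hje
      rw [val_even i hi (by omega) hi2, val_even j (by omega) hj hj2]; omega
    · have hi2 := Nat.even_iff.mp hie
      have hj2 := Nat.odd_iff.mp hjo
      rw [val_even i hi (by omega) hi2, val_odd j (by omega) hj hj2]
      have : (j + 1) / 2 ≤ n := by omega
      omega
    · have hi2 := Nat.odd_iff.mp hio
      have hj2 := Nat.even_iff.mp hje
      rw [val_odd i hi (by omega) hi2, val_even j (by omega) hj hj2]
      have : (i + 1) / 2 ≤ n := by omega
      omega
    · have hi2 := Nat.odd_iff.mp hio
      have hj2 := Nat.odd_iff.mp hjo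
      rw [val_odd i hi (by omega) hi2, val_odd j (by omega) hj hj2]; omega
  refine ⟨?_, ?_, ?_, ?_⟩
  · rintro ⟨f, hmono, hrange, hcmp⟩
    have m1 : (1:ℕ) ∈ Set.Icc 1 4 := by norm_num
    have m2 : (2:ℕ) ∈ Set.Icc 1 4 := by norm_num
    have m3 : (3:ℕ) ∈ Set.Icc 1 4 := by norm_num
    have m4 : (4:ℕ) ∈ Set.Icc 1 4 := by norm_num
    have f12 : f 1 < f 2 := hmono m1 m2 (by norm_num)
    have f13 : f 1 < f 3 := hmono m1 m3 (by norm_num)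
    have f34 : f 3 < f 4 := hmono m3 m4 (by norm_num)
    have r1 := hrange 1 m1; have r2 := hrange 2 m2
    have r3 := hrange 3 m3; have r4 := hrange 4 m4
    rw [Set.mem_Icc] at r1 r2 r3 r4
    have h21 : σ (f 2) < σ (f 1) := (hcmp 2 m2 1 m1).mpr (by decide)
    have h31 : σ (f 3) < σ (f 1) := (hcmp 3 m3 1 m1).mpr (by decide)
    have h43 : σ (f 4) < σ (f 3) := (hcmp 4 m4 3 m3).mpr (by decide)
    have k1 := (key (f 1) (f 2) r1.1 f12 r2.2).mp h21
    have k2 := (key (f 1) (f 3) r1.1 f13 r3.2).mp h31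
    have k3 := (key (f 3) (f 4) r3.1 f34 r4.2).mp h43
    omega
  · rintro ⟨f, hmono, hrange, hcmp⟩
    have m2 : (2:ℕ) ∈ Set.Icc 1 5 := by norm_num
    have m4 : (4:ℕ) ∈ Set.Icc 1 5 := by norm_num
    have m5 : (5:ℕ) ∈ Set.Icc 1 5 := by norm_num
    have f24 : f 2 < f 4 := hmono m2 m4 (by norm_num)
    have f45 : f 4 < f 5 := hmono m4 m5 (by norm_num)
    have r2 := hrange 2 m2; have r4 := hrange 4 m4; have r5 := hrange 5 m5
    rw [Set.mem_Icc] at r2 r4 r5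
    have h42 : σ (f 4) < σ (f 2) := (hcmp 4 m4 2 m2).mpr (by decide)
    have h54 : σ (f 5) < σ (f 4) := (hcmp 5 m5 4 m4).mpr (by decide)
    have k1 := (key (f 2) (f 4) r2.1 f24 r4.2).mp h42
    have k2 := (key (f 4) (f 5) r4.1 f45 r5.2).mp h54
    omega
  · rintro ⟨f, hmono, hrange, hcmp⟩
    have m1 : (1:ℕ) ∈ Set.Icc 1 5 := by norm_num
    have m2 : (2:ℕ) ∈ Set.Icc 1 5 := by norm_num
    have m4 : (4:ℕ) ∈ Set.Icc 1 5 := by norm_num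
    have f12 : f 1 < f 2 := hmono m1 m2 (by norm_num)
    have f24 : f 2 < f 4 := hmono m2 m4 (by norm_num)
    have r1 := hrange 1 m1; have r2 := hrange 2 m2; have r4 := hrange 4 m4
    rw [Set.mem_Icc] at r1 r2 r4
    have h21 : σ (f 2) < σ (f 1) := (hcmp 2 m2 1 m1).mpr (by decide)
    have h42 : σ (f 4) < σ (f 2) := (hcmp 4 m4 2 m2).mpr (by decide)
    have k1 := (key (f 1) (f 2) r1.1 f12 r2.2).mp h21
    have k2 := (key (f 2) (f 4) r2.1 f24 r4.2).mp h42
    omega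
  · rintro ⟨f, hmono, hrange, hcmp⟩
    have m1 : (1:ℕ) ∈ Set.Icc 1 6 := by norm_num
    have m3 : (3:ℕ) ∈ Set.Icc 1 6 := by norm_num
    have m4 : (4:ℕ) ∈ Set.Icc 1 6 := by norm_num
    have m6 : (6:ℕ) ∈ Set.Icc 1 6 := by norm_num
    have f13 : f 1 < f 3 := hmono m1 m3 (by norm_num)
    have f16 : f 1 < f 6 := hmono m1 m6 (by norm_num)
    have f46 : f 4 < f 6 := hmono m4 m6 (by norm_num)
    have r1 := hrange 1 m1; have r3 := hrange 3 m3
    have r4 := hrange 4 m4; have r6 := hrange 6 m6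
    rw [Set.mem_Icc] at r1 r3 r4 r6
    have h31 : σ (f 3) < σ (f 1) := (hcmp 3 m3 1 m1).mpr (by decide)
    have h64 : σ (f 6) < σ (f 4) := (hcmp 6 m6 4 m4).mpr (by decide)
    have h16 : σ (f 1) < σ (f 6) := (hcmp 1 m1 6 m6).mpr (by decide)
    have k1 := (key (f 1) (f 3) r1.1 f13 r3.2).mp h31
    have k2 := (key (f 4) (f 6) r4.1 f46 r6.2).mp h64
    have k3 := (key (f 1) (f 6) r1.1 f16 r6.2).mpr ⟨k1.1, k2.2⟩
    omega
end

section
/- The number of Dellac configurations of size n equals the cardinality of the set of permutations σ ∈ S_{2n} such that σ(2k-1) < σ(2k) for all k, and ⌈i/2⌉ ≤ σ(i) ≤ n + ⌈i/2⌉ for all 1 ≤ i ≤ 2n. -/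
/-- `σ` is an element of `S_m`, realized as a permutation of `ℕ` fixing everything
outside `{1,…,m}`. -/
def InSym (m : ℕ) (σ : Equiv.Perm ℕ) : Prop :=
  ∀ k, k ∉ Finset.Icc 1 m → σ k = k

namespace Stmt9Aux

/-- The predicate on permutations appearing in the statement. -/
def Good (n : ℕ) (σ : Equiv.Perm ℕ) : Prop :=
  InSym (2 * n) σ ∧
    (∀ k ∈ Finset.Icc 1 n, σ (2 * k - 1) < σ (2 * k)) ∧
    ∀ i ∈ Finset.Icc 1 (2 * n), (i + 1) / 2 ≤ σ i ∧ σ i ≤ n + (i + 1) / 2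

/-- The map from permutations to configurations. -/
def phi (n : ℕ) (σ : Equiv.Perm ℕ) : Finset (ℕ × ℕ) :=
  (Finset.Icc 1 (2 * n)).image (fun i => ((i + 1) / 2, σ i))

lemma mem_phi {n : ℕ} {σ : Equiv.Perm ℕ} {p : ℕ × ℕ} :
    p ∈ phi n σ ↔ ∃ i, (1 ≤ i ∧ i ≤ 2 * n) ∧ (i + 1) / 2 = p.1 ∧ σ i = p.2 := by
  simp [phi, Finset.mem_Icc, Prod.ext_iff, and_assoc]

lemma symm_mem {n : ℕ} {σ : Equiv.Perm ℕ} (hσ : InSym (2 * n) σ) {j : ℕ}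
    (hj : j ∈ Finset.Icc 1 (2 * n)) : σ.symm j ∈ Finset.Icc 1 (2 * n) := by
  by_contra h
  have h1 : σ (σ.symm j) = σ.symm j := hσ _ h
  rw [Equiv.apply_symm_apply] at h1
  rw [h1] at hj
  exact h hj

lemma dellac_phi {n : ℕ} {σ : Equiv.Perm ℕ} (hσ : Good n σ) : IsDellac n (phi n σ) := by
  obtain ⟨hsym, hord, hbd⟩ := hσ
  refine ⟨?_, ?_, ?_, ?_⟩
  · intro p hp
    obtain ⟨i, hi, hr, hc⟩ := mem_phi.1 hp
    have hb := hbd i (Finset.mem_Icc.2 hi)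
    rw [hr, hc] at hb
    constructor <;> rw [Finset.mem_Icc] <;> omega
  · intro j hj
    have hinv := symm_mem hsym hj
    refine ⟨(σ.symm j + 1) / 2, ?_, ?_⟩
    · exact mem_phi.2 ⟨σ.symm j, Finset.mem_Icc.1 hinv, rfl, Equiv.apply_symm_apply σ j⟩
    · intro r hr
      obtain ⟨i, hi, hri, hci⟩ := mem_phi.1 hr
      have : i = σ.symm j := by
        apply_fun σ.symm at hci
        simpa using hci
      have hri' : (i + 1) / 2 = r := hri
      rw [← hri', this]
  · intro k hk
    rw [Finset.mem_Icc] at hk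
    have hset : (phi n σ).filter (fun p => p.1 = k) =
        {(k, σ (2 * k - 1)), (k, σ (2 * k))} := by
      ext p
      simp only [Finset.mem_filter, Finset.mem_insert, Finset.mem_singleton]
      constructor
      · rintro ⟨hp, hpk⟩
        obtain ⟨i, hi, hr, hc⟩ := mem_phi.1 hp
        have : i = 2 * k - 1 ∨ i = 2 * k := by omega
        rcases this with h | h
        · left; exact Prod.ext hpk (by rw [← hc, h])
        · right; exact Prod.ext hpk (by rw [← hc, h])
      · rintro (h | h) <;> subst h
        · refine ⟨mem_phi.2 ⟨2 * k - 1, by omega, by simp; omega, rfl⟩, rfl⟩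
        · refine ⟨mem_phi.2 ⟨2 * k, by omega, by simp; omega, rfl⟩, rfl⟩
    rw [hset]
    have hne : σ (2 * k - 1) ≠ σ (2 * k) := Nat.ne_of_lt (hord k (Finset.mem_Icc.2 hk))
    rw [Finset.card_insert_of_notMem (by simp [hne]), Finset.card_singleton]
  · intro p hp
    obtain ⟨i, hi, hr, hc⟩ := mem_phi.1 hp
    have hb := hbd i (Finset.mem_Icc.2 hi)
    rw [hr, hc] at hb
    exact hb

lemma phi_inj {n : ℕ} {σ τ : Equiv.Perm ℕ} (hσ : Good n σ) (hτ : Good n τ)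
    (h : phi n σ = phi n τ) : σ = τ := by
  obtain ⟨hsymσ, hordσ, _⟩ := hσ
  obtain ⟨hsymτ, hordτ, _⟩ := hτ
  have key : ∀ k ∈ Finset.Icc 1 n, σ (2 * k - 1) = τ (2 * k - 1) ∧ σ (2 * k) = τ (2 * k) := by
    intro k hk
    rw [Finset.mem_Icc] at hk
    have mem : ∀ i, 1 ≤ i → i ≤ 2 * n → (i + 1) / 2 = k →
        σ i = τ (2 * k - 1) ∨ σ i = τ (2 * k) := by
      intro i h1 h2 h3
      have : ((i + 1) / 2, σ i) ∈ phi n τ := by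
        rw [← h]; exact mem_phi.2 ⟨i, ⟨h1, h2⟩, rfl, rfl⟩
      obtain ⟨i', hi', hr', hc'⟩ := mem_phi.1 this
      simp only at hr' hc'
      have : i' = 2 * k - 1 ∨ i' = 2 * k := by omega
      rcases this with h' | h'
      · left; rw [← hc', h']
      · right; rw [← hc', h']
    have mem' : ∀ i, 1 ≤ i → i ≤ 2 * n → (i + 1) / 2 = k →
        τ i = σ (2 * k - 1) ∨ τ i = σ (2 * k) := by
      intro i h1 h2 h3
      have : ((i + 1) / 2, τ i) ∈ phi n σ := by
        rw [h]; exact mem_phi.2 ⟨i, ⟨h1, h2⟩, rfl, rfl⟩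
      obtain ⟨i', hi', hr', hc'⟩ := mem_phi.1 this
      simp only at hr' hc'
      have : i' = 2 * k - 1 ∨ i' = 2 * k := by omega
      rcases this with h' | h'
      · left; rw [← hc', h']
      · right; rw [← hc', h']
    have m1 := mem (2 * k - 1) (by omega) (by omega) (by omega)
    have m2 := mem (2 * k) (by omega) (by omega) (by omega)
    have m3 := mem' (2 * k - 1) (by omega) (by omega) (by omega)
    have m4 := mem' (2 * k) (by omega) (by omega) (by omega)
    have o1 := hordσ k (Finset.mem_Icc.2 hk)
    have o2 := hordτ k (Finset.mem_Icc.2 hk)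
    omega
  ext i
  by_cases hi : i ∈ Finset.Icc 1 (2 * n)
  · rw [Finset.mem_Icc] at hi
    set k := (i + 1) / 2 with hk
    have hk1 : 1 ≤ k ∧ k ≤ n := by omega
    have hkey := key k (Finset.mem_Icc.2 hk1)
    have : i = 2 * k - 1 ∨ i = 2 * k := by omega
    rcases this with h' | h' <;> rw [h']
    · exact hkey.1
    · exact hkey.2
  · rw [hsymσ i hi, hsymτ i hi]

lemma exists_good {n : ℕ} {C : Finset (ℕ × ℕ)} (hC : IsDellac n C) :
    ∃ σ : Equiv.Perm ℕ, Good n σ ∧ phi n σ = C := by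
  obtain ⟨hbox, hcol, hrow, hmark⟩ := hC
  -- columns in row k
  set s : ℕ → Finset ℕ := fun k => (C.filter (fun p => p.1 = k)).image Prod.snd with hs
  have mem_s : ∀ k j, j ∈ s k ↔ (k, j) ∈ C := by
    intro k j
    simp only [hs, Finset.mem_image, Finset.mem_filter]
    constructor
    · rintro ⟨p, ⟨hp, hpk⟩, hpj⟩
      have : p = (k, j) := Prod.ext hpk hpj
      rwa [← this]
    · intro h; exact ⟨(k, j), ⟨h, rfl⟩, rfl⟩
  have card_s : ∀ k ∈ Finset.Icc 1 n, (s k).card = 2 := by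
    intro k hk
    rw [hs]
    rw [Finset.card_image_of_injOn, hrow k hk]
    intro p hp q hq hpq
    simp only [Finset.mem_coe, Finset.mem_filter] at hp hq
    exact Prod.ext (hp.2.trans hq.2.symm) hpq
  -- min and max of each row
  set a : ℕ → ℕ := fun k => sInf (↑(s k) : Set ℕ) with ha
  set b : ℕ → ℕ := fun k => sSup (↑(s k) : Set ℕ) with hb
  have s_ne : ∀ k ∈ Finset.Icc 1 n, (↑(s k) : Set ℕ).Nonempty := by
    intro k hk
    rw [Set.nonempty_coe_sort.symm]
    simp only [Finset.coe_sort_coe, Finset.nonempty_coe_sort]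
    rw [← Finset.card_pos, card_s k hk]; omega
  have a_mem : ∀ k ∈ Finset.Icc 1 n, a k ∈ s k := by
    intro k hk
    exact Nat.sInf_mem (s_ne k hk)
  have b_mem : ∀ k ∈ Finset.Icc 1 n, b k ∈ s k := by
    intro k hk
    have := Set.Nonempty.csSup_mem (s_ne k hk) (Finset.finite_toSet _)
    exact_mod_cast this
  have a_le : ∀ k j, j ∈ s k → a k ≤ j := fun k j hj => Nat.sInf_le hj
  have le_b : ∀ k j, j ∈ s k → j ≤ b k := by
    intro k j hj
    exact le_csSup (Set.Finite.bddAbove (Finset.finite_toSet _)) hj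
  have a_lt_b : ∀ k ∈ Finset.Icc 1 n, a k < b k := by
    intro k hk
    obtain ⟨j1, hj1, j2, hj2, hne⟩ := Finset.one_lt_card.1 (by rw [card_s k hk]; omega)
    rcases Nat.lt_or_ge (a k) (b k) with h | h
    · exact h
    have hab : b k ≤ a k := h
    have e1 : j1 = a k := le_antisymm ((le_b k j1 hj1).trans hab) (a_le k j1 hj1)
    have e2 : j2 = a k := le_antisymm ((le_b k j2 hj2).trans hab) (a_le k j2 hj2)
    exact absurd (e1.trans e2.symm) hne
  have s_eq : ∀ k ∈ Finset.Icc 1 n, s k = {a k, b k} := by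
    intro k hk
    apply (Finset.eq_of_subset_of_card_le ?_ ?_).symm
    · intro j hj
      rcases Finset.mem_insert.1 hj with h | h
      · rw [h]; exact a_mem k hk
      · rw [Finset.mem_singleton.1 h]; exact b_mem k hk
    · rw [card_s k hk, Finset.card_insert_of_notMem
        (by simp [Nat.ne_of_lt (a_lt_b k hk)]), Finset.card_singleton]
  -- the underlying function
  set f : ℕ → ℕ := fun i =>
    if 1 ≤ i ∧ i ≤ 2 * n then (if i % 2 = 1 then a ((i + 1) / 2) else b ((i + 1) / 2)) else i
    with hf
  have f_out : ∀ i, ¬(1 ≤ i ∧ i ≤ 2 * n) → f i = i := by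
    intro i hi; rw [hf]; simp [hi]
  have f_odd : ∀ k, 1 ≤ k → k ≤ n → f (2 * k - 1) = a k := by
    intro k h1 h2
    rw [hf]
    have c1 : 1 ≤ 2 * k - 1 ∧ 2 * k - 1 ≤ 2 * n := by omega
    have c2 : (2 * k - 1) % 2 = 1 := by omega
    have c3 : (2 * k - 1 + 1) / 2 = k := by omega
    simp only [c1, and_self, if_true, c2, c3, if_true]
  have f_even : ∀ k, 1 ≤ k → k ≤ n → f (2 * k) = b k := by
    intro k h1 h2
    rw [hf]
    have c1 : 1 ≤ 2 * k ∧ 2 * k ≤ 2 * n := by omega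
    have c2 : ¬((2 * k) % 2 = 1) := by omega
    have c3 : (2 * k + 1) / 2 = k := by omega
    simp only [c1, and_self, if_true, c2, if_false, c3]
  have f_mem_s : ∀ i, 1 ≤ i → i ≤ 2 * n → f i ∈ s ((i + 1) / 2) := by
    intro i h1 h2
    have hk : 1 ≤ (i + 1) / 2 ∧ (i + 1) / 2 ≤ n := by omega
    have hkI : (i + 1) / 2 ∈ Finset.Icc 1 n := Finset.mem_Icc.2 hk
    rw [hf]
    simp only [h1, h2, and_self, if_true]
    split
    · exact a_mem _ hkI
    · exact b_mem _ hkI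
  have f_in_C : ∀ i, 1 ≤ i → i ≤ 2 * n → ((i + 1) / 2, f i) ∈ C := by
    intro i h1 h2
    exact (mem_s _ _).1 (f_mem_s i h1 h2)
  have f_range : ∀ i, 1 ≤ i → i ≤ 2 * n → 1 ≤ f i ∧ f i ≤ 2 * n := by
    intro i h1 h2
    have := (hbox _ (f_in_C i h1 h2)).2
    rw [Finset.mem_Icc] at this
    exact this
  have f_inj : Function.Injective f := by
    intro i i' he
    by_cases hi : 1 ≤ i ∧ i ≤ 2 * n <;> by_cases hi' : 1 ≤ i' ∧ i' ≤ 2 * n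
    · -- both in range
      have c1 := f_in_C i hi.1 hi.2
      have c2 := f_in_C i' hi'.1 hi'.2
      rw [he] at c1
      have hjI : f i' ∈ Finset.Icc 1 (2 * n) := Finset.mem_Icc.2 (f_range i' hi'.1 hi'.2)
      obtain ⟨r, _, hu⟩ := hcol (f i') hjI
      have hk : (i + 1) / 2 = (i' + 1) / 2 := (hu _ c1).trans (hu _ c2).symm
      by_contra hne
      -- i and i' differ but have same ⌈·/2⌉, so opposite parity
      set k := (i + 1) / 2 with hkdef
      have hkb : 1 ≤ k ∧ k ≤ n := by omega
      have hcase : (i = 2 * k - 1 ∧ i' = 2 * k) ∨ (i = 2 * k ∧ i' = 2 * k - 1) := by omega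
      have hab := a_lt_b k (Finset.mem_Icc.2 hkb)
      rcases hcase with ⟨e1, e2⟩ | ⟨e1, e2⟩
      · rw [e1, e2, f_odd k hkb.1 hkb.2, f_even k hkb.1 hkb.2] at he; omega
      · rw [e1, e2, f_even k hkb.1 hkb.2, f_odd k hkb.1 hkb.2] at he; omega
    · have := f_range i hi.1 hi.2
      rw [he, f_out i' hi'] at this
      omega
    · have := f_range i' hi'.1 hi'.2
      rw [← he, f_out i hi] at this
      omega
    · rw [f_out i hi, f_out i' hi'] at he; exact he
  have f_surj : Function.Surjective f := by
    intro j
    by_cases hj : 1 ≤ j ∧ j ≤ 2 * n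
    · obtain ⟨r, hr, _⟩ := hcol j (Finset.mem_Icc.2 hj)
      have hrI : r ∈ Finset.Icc 1 n := (hbox _ hr).1
      have hrb := Finset.mem_Icc.1 hrI
      have hjs : j ∈ s r := (mem_s r j).2 hr
      rw [s_eq r hrI] at hjs
      rcases Finset.mem_insert.1 hjs with h | h
      · exact ⟨2 * r - 1, by rw [f_odd r hrb.1 hrb.2, ← h]⟩
      · rw [Finset.mem_singleton] at h
        exact ⟨2 * r, by rw [f_even r hrb.1 hrb.2, ← h]⟩
    · exact ⟨j, f_out j hj⟩
  set σ : Equiv.Perm ℕ := Equiv.ofBijective f ⟨f_inj, f_surj⟩ with hσ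
  have σ_app : ∀ i, σ i = f i := fun i => rfl
  refine ⟨σ, ⟨?_, ?_, ?_⟩, ?_⟩
  · intro i hi
    rw [Finset.mem_Icc] at hi
    rw [σ_app, f_out i hi]
  · intro k hk
    have hkb := Finset.mem_Icc.1 hk
    rw [σ_app, σ_app, f_odd k hkb.1 hkb.2, f_even k hkb.1 hkb.2]
    exact a_lt_b k hk
  · intro i hi
    rw [Finset.mem_Icc] at hi
    rw [σ_app]
    have := hmark _ (f_in_C i hi.1 hi.2)
    simpa using this
  · ext p
    rw [mem_phi]
    constructor
    · rintro ⟨i, ⟨h1, h2⟩, hr, hc⟩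
      have hCi := f_in_C i h1 h2
      have hfc : f i = p.2 := (σ_app i).symm.trans hc
      rw [hr, hfc] at hCi
      exact hCi
    · intro hp
      have hrI : p.1 ∈ Finset.Icc 1 n := (hbox _ hp).1
      have hrb := Finset.mem_Icc.1 hrI
      have hjs : p.2 ∈ s p.1 := (mem_s _ _).2 hp
      rw [s_eq _ hrI] at hjs
      rcases Finset.mem_insert.1 hjs with h | h
      · refine ⟨2 * p.1 - 1, by omega, by omega, ?_⟩
        rw [σ_app, f_odd _ hrb.1 hrb.2, ← h]
      · rw [Finset.mem_singleton] at h
        refine ⟨2 * p.1, by omega, by omega, ?_⟩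
        rw [σ_app, f_even _ hrb.1 hrb.2, ← h]

end Stmt9Aux

/-- The number of Dellac configurations of size `n` equals the number of `σ ∈ S_{2n}`
with `σ(2k-1) < σ(2k)` for all `k` and `⌈i/2⌉ ≤ σ(i) ≤ n + ⌈i/2⌉` for all `i`. -/
theorem stmt9 (n : ℕ) :
    Set.ncard {C : Finset (ℕ × ℕ) | IsDellac n C} =
    Set.ncard {σ : Equiv.Perm ℕ | InSym (2 * n) σ ∧
      (∀ k ∈ Finset.Icc 1 n, σ (2 * k - 1) < σ (2 * k)) ∧
      ∀ i ∈ Finset.Icc 1 (2 * n), (i + 1) / 2 ≤ σ i ∧ σ i ≤ n + (i + 1) / 2} := by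
  have hset : {C : Finset (ℕ × ℕ) | IsDellac n C} =
      Stmt9Aux.phi n '' {σ : Equiv.Perm ℕ | Stmt9Aux.Good n σ} := by
    ext C
    simp only [Set.mem_setOf_eq, Set.mem_image]
    constructor
    · intro hC
      obtain ⟨σ, hσ, hφ⟩ := Stmt9Aux.exists_good hC
      exact ⟨σ, hσ, hφ⟩
    · rintro ⟨σ, hσ, rfl⟩
      exact Stmt9Aux.dellac_phi hσ
  have hinj : Set.InjOn (Stmt9Aux.phi n) {σ : Equiv.Perm ℕ | Stmt9Aux.Good n σ} := by
    intro σ hσ τ hτ h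
    exact Stmt9Aux.phi_inj hσ hτ h
  rw [hset, Set.ncard_image_of_injOn hinj]
  rfl
end
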